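/- Let S = V(f) ⊂ ℙ³(ℂ) with f = w²z² + w(y³ + z·Q₂(x,y)) + H₄(x,y,z), where Q₂ = Σ_{i+j=2} q_{ij}x^i y^j and H₄ = Σ_{i+j+k=4} h_{ijk}x^i y^j z^k, satisfying h₄₀₀ = h₃₁₀ = q₂₀ = 0, h₃₀₁ ≠ 0 and h₂₂₀ = 1, suppose O = (0:0:0:1) is an isolated point of the singular locus of S, and assume S contains only finitely many lines. Let C = {(x:y:z:w) ∈ ℙ³(ℂ) : z = 0 and x² + h₁₃₀xy + h₀₄₀y² + yw = 0} be the conic residual to the line {y = z = 0} in the plane section S ∩ {z = 0}. Then at most 27 lines contained in S meet C. -/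

import Mathlib

open MvPolynomial

noncomputable section

abbrev P3 := Projectivization ℂ (Fin 4 → ℂ)

/-- The quotient topology on `ℙ³(ℂ)` induced from `ℂ⁴ ∖ {0}`. -/
instance : TopologicalSpace P3 :=
  inferInstanceAs (TopologicalSpace (Quotient (projectivizationSetoid ℂ (Fin 4 → ℂ))))

/-- A line in `ℙ³(ℂ)`: the projectivization of a 2-dimensional linear subspace of `ℂ⁴`. -/
def IsLine (L : Set P3) : Prop :=
  ∃ W : Submodule ℂ (Fin 4 → ℂ), Module.finrank ℂ W = 2 ∧
    L = {P : P3 | P.submodule ≤ W}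

/-- The zero set in `ℙ³(ℂ)` of a (homogeneous) polynomial. -/
def zeroSet (f : MvPolynomial (Fin 4) ℂ) : Set P3 :=
  {P | eval P.rep f = 0}

/-- `P` is a singular point of `V(f)`: `P ∈ V(f)` and all first partials vanish at `P`. -/
def IsSingPt (f : MvPolynomial (Fin 4) ℂ) (P : P3) : Prop :=
  eval P.rep f = 0 ∧ ∀ i, eval P.rep (pderiv i f) = 0

/-- `P` is an isolated point of the set `T`. -/
def IsIsolatedPtOf (P : P3) (T : Set P3) : Prop :=
  P ∈ T ∧ ∃ U : Set P3, IsOpen U ∧ P ∈ U ∧ U ∩ T = {P}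

/-- The point `O = (0:0:0:1)`. -/
def ptO : P3 :=
  Projectivization.mk ℂ ![0, 0, 0, 1] (by
    intro h
    simpa using congrFun h 3)

/-- `Q₂ = Σ_{i+j=2} q_{ij} xⁱ yʲ` built from a coefficient function `q`. -/
def quadForm (q : ℕ → ℕ → ℂ) : MvPolynomial (Fin 4) ℂ :=
  ∑ i ∈ Finset.range 3, C (q i (2 - i)) * X 0 ^ i * X 1 ^ (2 - i)

/-- `H₄ = Σ_{i+j+k=4} h_{ijk} xⁱ yʲ zᵏ` built from a coefficient function `h`. -/
def quartForm (h : ℕ → ℕ → ℕ → ℂ) : MvPolynomial (Fin 4) ℂ :=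
  ∑ i ∈ Finset.range 5, ∑ j ∈ Finset.range (5 - i),
    C (h i j (4 - i - j)) * X 0 ^ i * X 1 ^ j * X 2 ^ (4 - i - j)

/-!
A line of `S` meeting `C` either passes through `O`, and then it is `y = z = 0`, or it passes
through a point `p(s) = (s : 1 : 0 : -H₄₀(s))` of `C ∖ {O}`. In the second case it is not contained
in the plane `z = 0` (where `f = y² · (equation of C)`), so it also passes through a point
`(a : 0 : 1 : d)`. Restricting `f` to the line, the coefficient of `α³β` vanishes iff `d` is the
tangent-plane value, and the other three are a monic quadratic `E₂`, a quadratic `E₃` and a cubic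
`E₄` in `a` with coefficients in `ℂ[s]`. Replacing `E₄` by its remainder modulo `E₂` and
eliminating `a` with resultants, which are weighted homogeneous of degree at most `13` when `a` has
weight `2`, shows that there are at most `13` admissible pairs `(s, a)`, unless the resultants
vanish identically, in which case `S` contains infinitely many lines. So at most `1 + 13` lines
of `S` meet `C`.
-/

open scoped Polynomial

namespace Polynomial

variable {K : Type*} [Field K]

def evalQuad (g₂ g₁ g₀ : K[X]) (x : K × K) : K :=
  g₂.eval x.1 * x.2 ^ 2 + g₁.eval x.1 * x.2 + g₀.eval x.1

def evalLin (u₁ u₀ : K[X]) (x : K × K) : K :=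
  u₁.eval x.1 * x.2 + u₀.eval x.1

def quadLinResultant (g₂ g₁ g₀ u₁ u₀ : K[X]) : K[X] :=
  g₂ * u₀ ^ 2 - g₁ * u₀ * u₁ + g₀ * u₁ ^ 2

def quadLinZeros (c₁ c₀ g₂ g₁ g₀ u₁ u₀ : K[X]) : Set (K × K) :=
  {x | evalQuad 1 c₁ c₀ x = 0 ∧ evalQuad g₂ g₁ g₀ x = 0 ∧ evalLin u₁ u₀ x = 0}

theorem quartic_coeffs_eq_zero_of_forall [Infinite K] {c₀ c₁ c₂ c₃ c₄ : K}
    (h : ∀ t, c₀ + c₁ * t + c₂ * t ^ 2 + c₃ * t ^ 3 + c₄ * t ^ 4 = 0) :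
    c₀ = 0 ∧ c₁ = 0 ∧ c₂ = 0 ∧ c₃ = 0 ∧ c₄ = 0 := by
  have hp : C c₀ + C c₁ * X + C c₂ * X ^ 2 + C c₃ * X ^ 3 + C c₄ * X ^ 4 = 0 :=
    Polynomial.funext fun t => by simpa using h t
  have hc := fun n => congrArg (coeff · n) hp
  exact ⟨by simpa using hc 0, by simpa using hc 1, by simpa using hc 2, by simpa using hc 3,
    by simpa using hc 4⟩

theorem card_le_two_of_sq_add_mul_add_eq_zero {b c : K} (A : Finset K)
    (hA : ∀ a ∈ A, a ^ 2 + b * a + c = 0) : A.card ≤ 2 := by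
  have hdeg : (C 1 * X ^ 2 + C b * X + C c).natDegree = 2 := natDegree_quadratic one_ne_zero
  have hne : C 1 * X ^ 2 + C b * X + C c ≠ 0 := fun h0 =>
    two_ne_zero (hdeg.symm.trans (by rw [h0, natDegree_zero]))
  refine hdeg ▸ card_le_degree_of_subset_roots fun a ha => ?_
  rw [mem_roots hne]
  simpa using hA a ha

variable {c₁ c₀ g₂ g₁ g₀ u₁ u₀ : K[X]}

theorem eval_quadLinResultant {x : K × K} (hx : evalLin u₁ u₀ x = 0) :
    (quadLinResultant g₂ g₁ g₀ u₁ u₀).eval x.1 = u₁.eval x.1 ^ 2 * evalQuad g₂ g₁ g₀ x := by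
  simp only [quadLinResultant, evalQuad, evalLin, eval_add, eval_sub, eval_mul, eval_pow] at hx ⊢
  linear_combination (g₂.eval x.1 * (u₀.eval x.1 - u₁.eval x.1 * x.2)
    - g₁.eval x.1 * u₁.eval x.1) * hx

theorem sq_dvd_quadLinResultant {s : K} (h₁ : u₁.IsRoot s) (h₀ : u₀.IsRoot s) :
    (X - C s) ^ 2 ∣ quadLinResultant g₂ g₁ g₀ u₁ u₀ := by
  have d₁ := dvd_iff_isRoot.2 h₁
  have d₀ := dvd_iff_isRoot.2 h₀
  refine dvd_add (dvd_sub ?_ ?_) ?_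
  · exact (pow_dvd_pow_of_dvd d₀ 2).mul_left _
  · rw [sq, mul_assoc]
    exact (mul_dvd_mul d₀ d₁).mul_left _
  · exact (pow_dvd_pow_of_dvd d₁ 2).mul_left _

theorem card_fiber_le_rootMultiplicity [DecidableEq K] (T : Finset (K × K))
    (hT : ↑T ⊆ quadLinZeros c₁ c₀ g₂ g₁ g₀ u₁ u₀) (hR : quadLinResultant g₂ g₁ g₀ u₁ u₀ ≠ 0)
    (s : K) :
    (T.filter fun x => s = x.1).card ≤ (quadLinResultant g₂ g₁ g₀ u₁ u₀).rootMultiplicity s := by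
  set F := T.filter fun x => s = x.1
  have hF : ∀ x ∈ F, x ∈ quadLinZeros c₁ c₀ g₂ g₁ g₀ u₁ u₀ ∧ x.1 = s := fun x hx =>
    ⟨hT (Finset.mem_filter.1 hx).1, (Finset.mem_filter.1 hx).2.symm⟩
  obtain hle | hlt := le_or_gt F.card 1
  · obtain hF0 | ⟨x, hx⟩ := F.eq_empty_or_nonempty
    · simp [hF0]
    obtain ⟨⟨-, hG, hL⟩, rfl⟩ := hF x hx
    exact hle.trans ((rootMultiplicity_pos hR).2 (by
      rw [IsRoot, eval_quadLinResultant hL, hG, mul_zero]))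
  have hinj : Set.InjOn Prod.snd (F : Set (K × K)) := fun x hx y hy hxy =>
    Prod.ext ((hF x hx).2.trans (hF y hy).2.symm) hxy
  have hF2 : F.card ≤ 2 := by
    rw [← Finset.card_image_of_injOn hinj]
    refine card_le_two_of_sq_add_mul_add_eq_zero (b := c₁.eval s) (c := c₀.eval s) _ fun a ha => ?_
    obtain ⟨x, hx, rfl⟩ := Finset.mem_image.1 ha
    obtain ⟨⟨hQ, -, -⟩, rfl⟩ := hF x hx
    simpa [evalQuad] using hQ
  -- two points over `s` force `u₁(s) = u₀(s) = 0`, a double root of the resultant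
  obtain ⟨x, hx, y, hy, hxy⟩ := Finset.one_lt_card.1 hlt
  obtain ⟨⟨-, -, hLx⟩, rfl⟩ := hF x hx
  obtain ⟨⟨-, -, hLy⟩, hys⟩ := hF y hy
  have hsnd : x.2 - y.2 ≠ 0 := sub_ne_zero.2 fun h => hxy (Prod.ext hys.symm h)
  simp only [evalLin, hys] at hLx hLy
  have h₁ : u₁.IsRoot x.1 := (mul_eq_zero.1
    (by linear_combination hLx - hLy : u₁.eval x.1 * (x.2 - y.2) = 0)).resolve_right hsnd
  have h₀ : u₀.IsRoot x.1 := by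
    rw [IsRoot] at h₁ ⊢
    linear_combination hLx - x.2 * h₁
  exact hF2.trans ((le_rootMultiplicity_iff hR).2 (sq_dvd_quadLinResultant h₁ h₀))

theorem ncard_le_natDegree_quadLinResultant {S : Set (K × K)}
    (hS : S ⊆ quadLinZeros c₁ c₀ g₂ g₁ g₀ u₁ u₀) (hfin : S.Finite)
    (hR : quadLinResultant g₂ g₁ g₀ u₁ u₀ ≠ 0) :
    S.ncard ≤ (quadLinResultant g₂ g₁ g₀ u₁ u₀).natDegree := by
  classical
  set T := hfin.toFinset
  have hT : ↑T ⊆ quadLinZeros c₁ c₀ g₂ g₁ g₀ u₁ u₀ := by simpa [T] using hS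
  calc S.ncard = Multiset.card (T.val.map Prod.fst) := by
        simp [T, Set.ncard_eq_toFinset_card _ hfin]
    _ ≤ Multiset.card (quadLinResultant g₂ g₁ g₀ u₁ u₀).roots := by
        refine Multiset.card_le_card (Multiset.le_iff_count.2 fun s => ?_)
        rw [count_roots, Multiset.count_map]
        exact card_fiber_le_rootMultiplicity T hT hR s
    _ ≤ _ := card_roots' _

theorem quadLinZeros_infinite [Infinite K] (hQ : quadLinResultant 1 c₁ c₀ u₁ u₀ = 0)
    (hG : quadLinResultant g₂ g₁ g₀ u₁ u₀ = 0) (hu₁ : u₁ ≠ 0) :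
    (quadLinZeros c₁ c₀ g₂ g₁ g₀ u₁ u₀).Infinite := by
  let root : K → K × K := fun s => (s, -u₀.eval s / u₁.eval s)
  have hS : {s | ¬ u₁.IsRoot s}.Infinite := by
    simpa only [Set.compl_ofPred] using (finite_setOfPred_isRoot hu₁).infinite_compl
  refine Set.infinite_of_injOn_mapsTo (f := root) (fun s _ t _ hst => congrArg Prod.fst hst)
    (fun s (hs : u₁.eval s ≠ 0) => ?_) hS
  have hL : evalLin u₁ u₀ (root s) = 0 := by
    simp only [evalLin, root]
    field_simp
    ring
  have hquad {p₂ p₁ p₀ : K[X]} (h : quadLinResultant p₂ p₁ p₀ u₁ u₀ = 0) :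
      evalQuad p₂ p₁ p₀ (root s) = 0 :=
    (mul_eq_zero.1 ((eval_quadLinResultant hL).symm.trans (by rw [h, eval_zero]))).resolve_left
      (pow_ne_zero 2 hs)
  exact ⟨hquad hQ, hquad hG, hL⟩

theorem quadLinZeros_zero_zero :
    quadLinZeros c₁ c₀ g₂ g₁ g₀ 0 0 = quadLinZeros c₁ c₀ 1 c₁ c₀ (g₁ - g₂ * c₁) (g₀ - g₂ * c₀) := by
  ext x
  simp only [quadLinZeros, evalQuad, evalLin, Set.mem_ofPred_eq, eval_zero, eval_one, eval_sub,
    eval_mul, zero_mul, add_zero, one_mul]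
  constructor
  · rintro ⟨hQ, hG, -⟩
    exact ⟨hQ, hQ, by linear_combination hG - g₂.eval x.1 * hQ⟩
  · rintro ⟨hQ, -, hL⟩
    exact ⟨hQ, by linear_combination hL + g₂.eval x.1 * hQ, trivial⟩

/-- Weighted homogeneity, `a` having weight `2`. -/
theorem natDegree_quadLinResultant_le {k l : ℕ} (hg₂ : g₂.natDegree ≤ k)
    (hg₁ : g₁.natDegree ≤ k + 2) (hg₀ : g₀.natDegree ≤ k + 4) (hu₁ : u₁.natDegree ≤ l)
    (hu₀ : u₀.natDegree ≤ l + 2) :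
    (quadLinResultant g₂ g₁ g₀ u₁ u₀).natDegree ≤ k + 2 * l + 4 := by
  refine natDegree_add_le_of_degree_le ((natDegree_sub_le_of_le ?_ ?_).trans (max_self _).le) ?_
  · exact (natDegree_mul_le_of_le hg₂ (natDegree_pow_le_of_le 2 hu₀)).trans (by omega)
  · exact (natDegree_mul_le_of_le (natDegree_mul_le_of_le hg₁ hu₀) hu₁).trans (by omega)
  · exact (natDegree_mul_le_of_le hg₀ (natDegree_pow_le_of_le 2 hu₁)).trans (by omega)

variable [IsAlgClosed K]

theorem exists_sq_add_mul_add_eq_zero (b c : K) : ∃ a, a ^ 2 + b * a + c = 0 := by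
  obtain ⟨a, ha⟩ := IsAlgClosed.exists_root (C 1 * X ^ 2 + C b * X + C c)
    (by rw [degree_quadratic one_ne_zero]; decide)
  exact ⟨a, by simpa using ha⟩

theorem ncard_quadLinZeros_self_le (hfin : (quadLinZeros c₁ c₀ 1 c₁ c₀ u₁ u₀).Finite) :
    (quadLinZeros c₁ c₀ 1 c₁ c₀ u₁ u₀).ncard ≤ (quadLinResultant 1 c₁ c₀ u₁ u₀).natDegree := by
  by_cases hR : quadLinResultant 1 c₁ c₀ u₁ u₀ = 0
  · exfalso
    by_cases hu₁ : u₁ = 0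
    · have hu₀ : u₀ = 0 := by simpa [quadLinResultant, hu₁] using hR
      choose root hroot using fun s : K => exists_sq_add_mul_add_eq_zero (c₁.eval s) (c₀.eval s)
      refine Set.infinite_of_injOn_mapsTo (f := fun s => (s, root s))
        (fun s _ t _ hst => congrArg Prod.fst hst) (fun s _ => ?_) Set.infinite_univ hfin
      have hQ : evalQuad 1 c₁ c₀ (s, root s) = 0 := by simpa [evalQuad] using hroot s
      exact ⟨hQ, hQ, by simp [evalLin, hu₁, hu₀]⟩
    · exact quadLinZeros_infinite hR hR hu₁ hfin
  · exact ncard_le_natDegree_quadLinResultant le_rfl hfin hR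

theorem ncard_quadLinZeros_le (hfin : (quadLinZeros c₁ c₀ g₂ g₁ g₀ u₁ u₀).Finite) :
    (quadLinZeros c₁ c₀ g₂ g₁ g₀ u₁ u₀).ncard ≤
      max (quadLinResultant 1 c₁ c₀ u₁ u₀).natDegree
        (max (quadLinResultant g₂ g₁ g₀ u₁ u₀).natDegree
          (quadLinResultant 1 c₁ c₀ (g₁ - g₂ * c₁) (g₀ - g₂ * c₀)).natDegree) := by
  by_cases hQ : quadLinResultant 1 c₁ c₀ u₁ u₀ = 0
  · by_cases hG : quadLinResultant g₂ g₁ g₀ u₁ u₀ = 0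
    · by_cases hu₁ : u₁ = 0
      · have hu₀ : u₀ = 0 := by simpa [quadLinResultant, hu₁] using hQ
        subst hu₁ hu₀
        rw [quadLinZeros_zero_zero] at hfin ⊢
        exact (ncard_quadLinZeros_self_le hfin).trans (le_max_of_le_right (le_max_right _ _))
      · exact absurd hfin (quadLinZeros_infinite hQ hG hu₁)
    · exact (ncard_le_natDegree_quadLinResultant le_rfl hfin hG).trans
        (le_max_of_le_right (le_max_left _ _))
  · exact (ncard_le_natDegree_quadLinResultant (fun x hx => ⟨hx.1, hx.1, hx.2.2⟩) hfin hQ).trans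
      (le_max_left _ _)

end Polynomial

namespace Projectivization

variable {K V : Type*} [DivisionRing K] [AddCommGroup V] [Module K V]

theorem mk_mem_setOf_submodule_le {W : Submodule K V} {v : V} (hv : v ≠ 0) :
    mk K v hv ∈ {P : Projectivization K V | P.submodule ≤ W} ↔ v ∈ W := by
  rw [Set.mem_ofPred_eq, submodule_mk, Submodule.span_singleton_le_iff_mem]

theorem rep_mem_submodule (P : Projectivization K V) : P.rep ∈ P.submodule := by
  rw [submodule_eq]
  exact Submodule.mem_span_singleton_self _

theorem setOf_submodule_le_injective :
    Function.Injective fun W : Submodule K V => {P : Projectivization K V | P.submodule ≤ W} := by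
  have key {W W' : Submodule K V} (hWW' : {P : Projectivization K V | P.submodule ≤ W} =
      {P | P.submodule ≤ W'}) : W ≤ W' := by
    intro v hv
    by_cases hv0 : v = 0
    · exact hv0 ▸ W'.zero_mem
    · rwa [← mk_mem_setOf_submodule_le hv0, ← hWW', mk_mem_setOf_submodule_le]
  exact fun W W' hWW' => le_antisymm (key hWW') (key hWW'.symm)

end Projectivization

theorem finrank_span_pair {K V : Type*} [DivisionRing K] [AddCommGroup V] [Module K V] {x y : V}
    (h : LinearIndependent K ![x, y]) : Module.finrank K (Submodule.span K {x, y}) = 2 := by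
  have := finrank_span_eq_card h
  rwa [Matrix.range_cons_cons_empty, Fintype.card_fin] at this

theorem setOf_submodule_le_subset_zeroSet_iff {f : MvPolynomial (Fin 4) ℂ} {n : ℕ} (hn : n ≠ 0)
    (hf : ∀ (c : ℂ) v, eval (c • v) f = c ^ n * eval v f) (W : Submodule ℂ (Fin 4 → ℂ)) :
    {P : P3 | P.submodule ≤ W} ⊆ zeroSet f ↔ ∀ v ∈ W, eval v f = 0 := by
  refine ⟨fun hW v hv => ?_, fun hW P hP => hW _ (hP (Projectivization.rep_mem_submodule P))⟩
  by_cases hv0 : v = 0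
  · rw [hv0, ← zero_smul ℂ (0 : Fin 4 → ℂ), hf, zero_pow hn, zero_mul]
  obtain ⟨c, hc⟩ := Projectivization.exists_smul_eq_mk_rep ℂ v hv0
  have := hW ((Projectivization.mk_mem_setOf_submodule_le hv0).2 hv)
  rw [zeroSet, Set.mem_ofPred_eq, ← hc, Units.smul_def, hf] at this
  exact (mul_eq_zero.1 this).resolve_left (pow_ne_zero _ c.ne_zero)

namespace Q5

open Polynomial (derivative evalQuad evalLin quadLinZeros quadLinResultant
  quartic_coeffs_eq_zero_of_forall natDegree_quadLinResultant_le natDegree_one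
  natDegree_sub_le_of_le natDegree_mul_le_of_le)

variable (q : ℕ → ℕ → ℂ) (h : ℕ → ℕ → ℕ → ℂ)

def quartic (v : Fin 4 → ℂ) : ℂ :=
  v 3 ^ 2 * v 2 ^ 2 + v 3 * (v 1 ^ 3 + v 2 * (q 1 1 * v 0 * v 1 + q 0 2 * v 1 ^ 2))
    + (v 0 ^ 2 * v 1 ^ 2 + h 1 3 0 * v 0 * v 1 ^ 3 + h 0 4 0 * v 1 ^ 4)
    + v 2 * (h 3 0 1 * v 0 ^ 3 + h 2 1 1 * v 0 ^ 2 * v 1 + h 1 2 1 * v 0 * v 1 ^ 2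
      + h 0 3 1 * v 1 ^ 3)
    + v 2 ^ 2 * (h 2 0 2 * v 0 ^ 2 + h 1 1 2 * v 0 * v 1 + h 0 2 2 * v 1 ^ 2)
    + v 2 ^ 3 * (h 1 0 3 * v 0 + h 0 1 3 * v 1) + h 0 0 4 * v 2 ^ 4

theorem eval_eq_quartic (f : MvPolynomial (Fin 4) ℂ)
    (hf : f = X 3 ^ 2 * X 2 ^ 2 + X 3 * (X 1 ^ 3 + X 2 * quadForm q) + quartForm h)
    (h400 : h 4 0 0 = 0) (h310 : h 3 1 0 = 0) (q20 : q 2 0 = 0) (h220 : h 2 2 0 = 1)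
    (v : Fin 4 → ℂ) : eval v f = quartic q h v := by
  subst hf
  simp only [quadForm, quartForm, Finset.sum_range_succ, Finset.range_one, Finset.sum_singleton,
    tsub_zero, pow_zero, mul_one, Nat.add_one_sub_one, pow_one, tsub_self, q20, C_0, zero_mul,
    add_zero, Nat.reduceSub, h220, C_1, one_mul, h310, zero_tsub, h400, map_add, map_mul,
    map_pow, eval_X, eval_C, quartic]
  ring

theorem quartic_smul (c : ℂ) (v : Fin 4 → ℂ) : quartic q h (c • v) = c ^ 4 * quartic q h v := by
  simp only [quartic, Pi.smul_apply, smul_eq_mul]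
  ring

def conicForm (v : Fin 4 → ℂ) : ℂ :=
  v 0 ^ 2 + h 1 3 0 * v 0 * v 1 + h 0 4 0 * v 1 ^ 2 + v 1 * v 3

theorem quartic_of_z_eq_zero {v : Fin 4 → ℂ} (hz : v 2 = 0) :
    quartic q h v = v 1 ^ 2 * conicForm h v := by
  simp only [quartic, conicForm, hz]
  ring

/-! `Hᵢⱼ(s)` is the coefficient of `zʲ` in `H₄(s, 1, z)` and `Q2(s) = Q₂(s, 1)`. -/

def H40 : ℂ[X] :=
  Polynomial.X ^ 2 + Polynomial.C (h 1 3 0) * Polynomial.X + Polynomial.C (h 0 4 0)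

def H31 : ℂ[X] :=
  Polynomial.C (h 3 0 1) * Polynomial.X ^ 3 + Polynomial.C (h 2 1 1) * Polynomial.X ^ 2
    + Polynomial.C (h 1 2 1) * Polynomial.X + Polynomial.C (h 0 3 1)

def H22 : ℂ[X] :=
  Polynomial.C (h 2 0 2) * Polynomial.X ^ 2 + Polynomial.C (h 1 1 2) * Polynomial.X
    + Polynomial.C (h 0 2 2)

def H13 : ℂ[X] := Polynomial.C (h 1 0 3) * Polynomial.X + Polynomial.C (h 0 1 3)

def Q2 : ℂ[X] := Polynomial.C (q 1 1) * Polynomial.X + Polynomial.C (q 0 2)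

def D₀ : ℂ[X] := Q2 q * H40 h - H31 h

/-! Restricted to the line through `p(s)` and `(a : 0 : 1 : d)` with `d` the tangent-plane value,
`f` becomes `α²β² E₂ + αβ³ E₃ + β⁴ E₄` where `E₂ = a² + P₁ a + P₀`, `E₃ = G₂ a² + G₁ a + G₀`
and `E₄ = h₃₀₁ a³ + K₂ a² + K₁ a + K₀` (see `quartic_pencil`). -/

def P₁ : ℂ[X] :=
  derivative (H31 h) - Polynomial.C (q 1 1) * H40 h - Q2 q * derivative (H40 h)

def P₀ : ℂ[X] := H40 h ^ 2 + H22 h + Q2 q * D₀ q h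

def G₂ : ℂ[X] :=
  Polynomial.C (3 * h 3 0 1) * Polynomial.X + Polynomial.C (h 2 1 1)
    - Polynomial.C (q 1 1) * derivative (H40 h)

def G₁ : ℂ[X] :=
  Polynomial.C (q 1 1) * D₀ q h + 2 * H40 h * derivative (H40 h) + derivative (H22 h)

def G₀ : ℂ[X] := H13 h - 2 * H40 h * D₀ q h

def K₂ : ℂ[X] := derivative (H40 h) ^ 2 + Polynomial.C (h 2 0 2)

def K₁ : ℂ[X] := Polynomial.C (h 1 0 3) - 2 * D₀ q h * derivative (H40 h)

def K₀ : ℂ[X] := D₀ q h ^ 2 + Polynomial.C (h 0 0 4)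

def conicPt (s : ℂ) : Fin 4 → ℂ := ![s, 1, 0, -(H40 h).eval s]

def planeY0Pt (a d : ℂ) : Fin 4 → ℂ := ![a, 0, 1, d]

/-- `planeY0Pt a d` lies on the tangent plane of `S` at `conicPt h s` iff `d = tangentW q h s a`. -/
def tangentW (s a : ℂ) : ℂ := (D₀ q h).eval s - (derivative (H40 h)).eval s * a

set_option maxRecDepth 10000 in
theorem quartic_pencil (s a t α β : ℂ) :
    quartic q h (α • conicPt h s + β • planeY0Pt a (tangentW q h s a + t)) =
      α ^ 3 * β * t + α ^ 2 * β ^ 2 * (evalQuad 1 (P₁ q h) (P₀ q h) (s, a) + t * (Q2 q).eval s)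
      + α * β ^ 3 * (evalQuad (G₂ q h) (G₁ q h) (G₀ q h) (s, a)
        + t * (q 1 1 * a - 2 * (H40 h).eval s))
      + β ^ 4 * (h 3 0 1 * a ^ 3 + evalQuad (K₂ h) (K₁ q h) (K₀ q h) (s, a)
        + t * (2 * tangentW q h s a + t)) := by
  simp only [quartic, conicPt, planeY0Pt, tangentW, evalQuad, P₁, P₀, G₂, G₁, G₀, K₂, K₁, K₀, D₀,
    H40, H31, H22, H13, Q2, Pi.add_apply, Pi.smul_apply, smul_eq_mul, Matrix.cons_val_zero,
    Matrix.cons_val_one, Matrix.cons_val_two, Matrix.cons_val_three, Matrix.head_cons,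
    Matrix.tail_cons, Polynomial.derivative_add, Polynomial.derivative_mul,
    Polynomial.derivative_C, Polynomial.derivative_X, Polynomial.derivative_X_pow,
    Polynomial.eval_add, Polynomial.eval_sub, Polynomial.eval_mul, Polynomial.eval_pow,
    Polynomial.eval_C, Polynomial.eval_X, Polynomial.eval_one, Polynomial.eval_ofNat,
    Polynomial.eval_zero]
  ring

theorem conic_cases {v : Fin 4 → ℂ} (hv : v ≠ 0) (hz : v 2 = 0) (hC : conicForm h v = 0) :
    (∃ c : ℂ, c • v = ![0, 0, 0, 1]) ∨ ∃ s c : ℂ, c • v = conicPt h s := by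
  by_cases hy : v 1 = 0
  · have hx : v 0 = 0 := pow_eq_zero_iff two_ne_zero |>.1 (by simpa [conicForm, hy] using hC)
    have hw : v 3 ≠ 0 := fun hw => hv (funext fun i => by fin_cases i <;> simp [hx, hy, hz, hw])
    exact Or.inl ⟨(v 3)⁻¹, funext fun i => by fin_cases i <;> simp [hx, hy, hz, hw]⟩
  · have hw : (v 1)⁻¹ * v 3 = -((v 0 / v 1) ^ 2 + h 1 3 0 * (v 0 / v 1) + h 0 4 0) := by
      rw [conicForm] at hC
      field_simp
      linear_combination hC
    refine Or.inr ⟨v 0 / v 1, (v 1)⁻¹, funext fun i => ?_⟩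
    fin_cases i <;> simp [conicPt, H40, hz, hy, hw, div_eq_inv_mul]

def lineXW : Submodule ℂ (Fin 4 → ℂ) := Submodule.span ℂ {![1, 0, 0, 0], ![0, 0, 0, 1]}

theorem finrank_lineXW : Module.finrank ℂ lineXW = 2 :=
  finrank_span_pair (LinearIndependent.pair_iff.2 fun a b hab =>
    ⟨by simpa using congrFun hab 0, by simpa using congrFun hab 3⟩)

theorem eq_lineXW {W : Submodule ℂ (Fin 4 → ℂ)} (hW : Module.finrank ℂ W = 2)
    (hS : ∀ v ∈ W, quartic q h v = 0) (hO : ![0, 0, 0, 1] ∈ W) : W = lineXW := by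
  refine Submodule.eq_of_le_of_finrank_eq (fun v hv => ?_) (hW.trans finrank_lineXW.symm)
  have key : ∀ t : ℂ, quartic q h v + (2 * v 3 * v 2 ^ 2 + v 1 ^ 3
      + v 2 * (q 1 1 * v 0 * v 1 + q 0 2 * v 1 ^ 2)) * t + v 2 ^ 2 * t ^ 2 + 0 * t ^ 3
      + 0 * t ^ 4 = 0 := fun t => by
    have := hS _ (W.add_mem hv (W.smul_mem t hO))
    simp only [quartic, Pi.add_apply, Pi.smul_apply, smul_eq_mul, Matrix.cons_val_zero,
      Matrix.cons_val_one, Matrix.cons_val_two, Matrix.cons_val_three, Matrix.head_cons,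
      Matrix.tail_cons] at this ⊢
    linear_combination this
  obtain ⟨-, h₁, h₂, -⟩ := quartic_coeffs_eq_zero_of_forall key
  have hz : v 2 = 0 := pow_eq_zero_iff two_ne_zero |>.1 h₂
  have hy : v 1 = 0 := pow_eq_zero_iff three_ne_zero |>.1 (by simpa [hz] using h₁)
  refine Submodule.mem_span_pair.2 ⟨v 0, v 3, funext fun i => ?_⟩
  fin_cases i <;> simp [hy, hz]

theorem conicPt_ne_zero (s : ℂ) : conicPt h s ≠ 0 := fun h0 => by
  simpa [conicPt] using congrFun h0 1

/-- On the plane `z = 0`, `f` is `y²` times the equation of `C`, so the only line of `S` there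
is `y = z = 0`, which misses `conicPt h s`. -/
theorem exists_planeY0Pt_mem {W : Submodule ℂ (Fin 4 → ℂ)} (hW : Module.finrank ℂ W = 2)
    (hS : ∀ v ∈ W, quartic q h v = 0) {s : ℂ} (hp : conicPt h s ∈ W) :
    ∃ a d, planeY0Pt a d ∈ W := by
  obtain ⟨k, hkW, hk⟩ := SetLike.not_le_iff_exists.1 fun hle : W ≤ ℂ ∙ conicPt h s => by
    have := Submodule.finrank_mono hle
    rw [hW, finrank_span_singleton (conicPt_ne_zero h s)] at this
    omega
  obtain ⟨k', hk'W, hk'1, hk'0⟩ : ∃ k' ∈ W, k' 1 = 0 ∧ k' ≠ 0 :=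
    ⟨k - k 1 • conicPt h s, W.sub_mem hkW (W.smul_mem _ hp),
      by simp only [Pi.sub_apply, Pi.smul_apply, smul_eq_mul]; simp [conicPt],
      fun h0 => hk (Submodule.mem_span_singleton.2 ⟨k 1, (sub_eq_zero.1 h0).symm⟩)⟩
  by_cases hk'2 : k' 2 = 0
  · exfalso
    have key : ∀ t : ℂ, 0 + (k' 3 + (2 * s + h 1 3 0) * k' 0) * t + k' 0 ^ 2 * t ^ 2
        + 0 * t ^ 3 + 0 * t ^ 4 = 0 := fun t => by
      have := hS _ (W.add_mem hp (W.smul_mem t hk'W))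
      rw [quartic_of_z_eq_zero q h (by simp [conicPt, hk'2])] at this
      simp only [conicForm, conicPt, H40, Pi.add_apply, Pi.smul_apply, smul_eq_mul, hk'1,
        Matrix.cons_val_zero, Matrix.cons_val_one, Matrix.cons_val_three, Matrix.head_cons,
        Matrix.tail_cons, Polynomial.eval_add, Polynomial.eval_mul, Polynomial.eval_pow,
        Polynomial.eval_C, Polynomial.eval_X] at this
      linear_combination this
    obtain ⟨-, h₁, h₂, -⟩ := quartic_coeffs_eq_zero_of_forall key
    have hx : k' 0 = 0 := pow_eq_zero_iff two_ne_zero |>.1 h₂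
    have hw : k' 3 = 0 := by simpa [hx] using h₁
    exact hk'0 (funext fun i => by fin_cases i <;> simp [hx, hk'1, hk'2, hw])
  · refine ⟨k' 0 / k' 2, k' 3 / k' 2, ?_⟩
    convert W.smul_mem (k' 2)⁻¹ hk'W using 1
    funext i
    fin_cases i <;> simp [planeY0Pt, hk'1, hk'2, div_eq_inv_mul]

def lineParams : Set (ℂ × ℂ) :=
  {x | evalQuad 1 (P₁ q h) (P₀ q h) x = 0 ∧ evalQuad (G₂ q h) (G₁ q h) (G₀ q h) x = 0 ∧
    h 3 0 1 * x.2 ^ 3 + evalQuad (K₂ h) (K₁ q h) (K₀ q h) x = 0}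

def lineSpan (x : ℂ × ℂ) : Submodule ℂ (Fin 4 → ℂ) :=
  Submodule.span ℂ {conicPt h x.1, planeY0Pt x.2 (tangentW q h x.1 x.2)}

theorem finrank_lineSpan (x : ℂ × ℂ) : Module.finrank ℂ (lineSpan q h x) = 2 :=
  finrank_span_pair (LinearIndependent.pair_iff.2 fun α β hαβ =>
    ⟨by simpa [conicPt, planeY0Pt] using congrFun hαβ 1,
      by simpa [conicPt, planeY0Pt] using congrFun hαβ 2⟩)

theorem lineSpan_injective : Function.Injective (lineSpan q h) := by
  intro x x' hxx'
  obtain ⟨α, β, hp⟩ := Submodule.mem_span_pair.1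
    (hxx' ▸ Submodule.subset_span (by simp) : conicPt h x.1 ∈ lineSpan q h x')
  obtain ⟨α', β', hu⟩ := Submodule.mem_span_pair.1
    (hxx' ▸ Submodule.subset_span (by simp) :
      planeY0Pt x.2 (tangentW q h x.1 x.2) ∈ lineSpan q h x')
  obtain rfl : α = 1 := by simpa [conicPt, planeY0Pt] using congrFun hp 1
  obtain rfl : β = 0 := by simpa [conicPt, planeY0Pt] using congrFun hp 2
  obtain rfl : α' = 0 := by simpa [conicPt, planeY0Pt] using congrFun hu 1
  obtain rfl : β' = 1 := by simpa [conicPt, planeY0Pt] using congrFun hu 2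
  exact Prod.ext (by simpa [conicPt] using (congrFun hp 0).symm)
    (by simpa [planeY0Pt] using (congrFun hu 0).symm)

theorem quartic_eq_zero_of_mem_lineSpan {x : ℂ × ℂ} (hx : x ∈ lineParams q h) :
    ∀ v ∈ lineSpan q h x, quartic q h v = 0 := by
  intro v hv
  obtain ⟨α, β, rfl⟩ := Submodule.mem_span_pair.1 hv
  obtain ⟨hQ, hG, hK⟩ := hx
  have := quartic_pencil q h x.1 x.2 0 α β
  rw [add_zero] at this
  rw [this, hQ, hG, hK]
  ring

theorem eq_lineSpan {W : Submodule ℂ (Fin 4 → ℂ)} (hW : Module.finrank ℂ W = 2)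
    (hS : ∀ v ∈ W, quartic q h v = 0) {s : ℂ} (hp : conicPt h s ∈ W) :
    ∃ a, (s, a) ∈ lineParams q h ∧ W = lineSpan q h (s, a) := by
  obtain ⟨a, d, hu⟩ := exists_planeY0Pt_mem q h hW hS hp
  obtain ⟨t, rfl⟩ : ∃ t, d = tangentW q h s a + t := ⟨d - tangentW q h s a, by ring⟩
  have key : ∀ β : ℂ, 0 + t * β
      + (evalQuad 1 (P₁ q h) (P₀ q h) (s, a) + t * (Q2 q).eval s) * β ^ 2
      + (evalQuad (G₂ q h) (G₁ q h) (G₀ q h) (s, a) + t * (q 1 1 * a - 2 * (H40 h).eval s))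
        * β ^ 3
      + (h 3 0 1 * a ^ 3 + evalQuad (K₂ h) (K₁ q h) (K₀ q h) (s, a)
        + t * (2 * tangentW q h s a + t)) * β ^ 4 = 0 := fun β => by
    have := hS _ (W.add_mem (W.smul_mem 1 hp) (W.smul_mem β hu))
    rw [quartic_pencil] at this
    linear_combination this
  obtain ⟨-, rfl, hQ, hG, hK⟩ := quartic_coeffs_eq_zero_of_forall key
  simp only [zero_mul, add_zero] at hQ hG hK hu
  refine ⟨a, ⟨hQ, hG, hK⟩, (Submodule.eq_of_le_of_finrank_eq ?_ ?_).symm⟩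
  · rw [lineSpan, Submodule.span_le, Set.insert_subset_iff, Set.singleton_subset_iff]
    exact ⟨hp, hu⟩
  · rw [hW, finrank_lineSpan]

theorem eq_lineXW_or_eq_lineSpan {W : Submodule ℂ (Fin 4 → ℂ)} (hW : Module.finrank ℂ W = 2)
    (hS : ∀ v ∈ W, quartic q h v = 0) {v : Fin 4 → ℂ} (hvW : v ∈ W) (hv : v ≠ 0) (hz : v 2 = 0)
    (hC : conicForm h v = 0) : W = lineXW ∨ ∃ x ∈ lineParams q h, W = lineSpan q h x := by
  rcases conic_cases h hv hz hC with ⟨c, hc⟩ | ⟨s, c, hc⟩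
  · exact Or.inl (eq_lineXW q h hW hS (hc ▸ W.smul_mem c hvW))
  · obtain ⟨a, ha, hWa⟩ := eq_lineSpan q h hW hS (hc ▸ W.smul_mem c hvW)
    exact Or.inr ⟨(s, a), ha, hWa⟩

def R₁ : ℂ[X] :=
  K₁ q h - Polynomial.C (h 3 0 1) * P₀ q h - (K₂ h - Polynomial.C (h 3 0 1) * P₁ q h) * P₁ q h

def R₀ : ℂ[X] := K₀ q h - (K₂ h - Polynomial.C (h 3 0 1) * P₁ q h) * P₀ q h

theorem cubic_eq_mul_evalQuad_add_evalLin (x : ℂ × ℂ) :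
    h 3 0 1 * x.2 ^ 3 + evalQuad (K₂ h) (K₁ q h) (K₀ q h) x =
      (h 3 0 1 * x.2 + (K₂ h - Polynomial.C (h 3 0 1) * P₁ q h).eval x.1)
        * evalQuad 1 (P₁ q h) (P₀ q h) x + evalLin (R₁ q h) (R₀ q h) x := by
  simp only [evalQuad, evalLin, R₁, R₀, Polynomial.eval_sub, Polynomial.eval_mul,
    Polynomial.eval_C, Polynomial.eval_one]
  ring

theorem lineParams_eq_quadLinZeros :
    lineParams q h =
      quadLinZeros (P₁ q h) (P₀ q h) (G₂ q h) (G₁ q h) (G₀ q h) (R₁ q h) (R₀ q h) := by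
  ext x
  simp only [lineParams, quadLinZeros, Set.mem_ofPred_eq, cubic_eq_mul_evalQuad_add_evalLin]
  constructor
  · rintro ⟨hQ, hG, hK⟩
    exact ⟨hQ, hG, by simpa [hQ] using hK⟩
  · rintro ⟨hQ, hG, hL⟩
    exact ⟨hQ, hG, by simp [hQ, hL]⟩

theorem natDegree_coeffs_le :
    (P₁ q h).natDegree ≤ 2 ∧ (P₀ q h).natDegree ≤ 4 ∧ (G₂ q h).natDegree ≤ 1 ∧
      (G₁ q h).natDegree ≤ 3 ∧ (G₀ q h).natDegree ≤ 5 ∧ (R₁ q h).natDegree ≤ 4 ∧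
      (R₀ q h).natDegree ≤ 6 := by
  simp only [R₁, R₀, K₂, K₁, K₀, G₂, G₁, G₀, P₁, P₀, D₀, H40, H31, H22, H13, Q2,
    Polynomial.derivative_add, Polynomial.derivative_mul, Polynomial.derivative_C,
    Polynomial.derivative_X, Polynomial.derivative_X_pow, zero_mul, zero_add, add_zero]
  refine ⟨?_, ?_, ?_, ?_, ?_, ?_, ?_⟩ <;> compute_degree

theorem ncard_lineParams_le (hfin : (lineParams q h).Finite) : (lineParams q h).ncard ≤ 13 := by
  obtain ⟨hP₁, hP₀, hG₂, hG₁, hG₀, hR₁, hR₀⟩ := natDegree_coeffs_le q h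
  rw [lineParams_eq_quadLinZeros] at hfin ⊢
  refine (Polynomial.ncard_quadLinZeros_le hfin).trans (max_le ?_ (max_le ?_ ?_))
  · exact (natDegree_quadLinResultant_le (k := 0) (l := 4) natDegree_one.le hP₁ hP₀ hR₁ hR₀).trans
      (by norm_num)
  · exact natDegree_quadLinResultant_le (k := 1) (l := 4) hG₂ hG₁ hG₀ hR₁ hR₀
  · refine (natDegree_quadLinResultant_le (k := 0) (l := 3) natDegree_one.le hP₁ hP₀ ?_ ?_).trans
      (by norm_num)
    · exact (natDegree_sub_le_of_le hG₁ (natDegree_mul_le_of_le hG₂ hP₁)).trans (by omega)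
    · exact (natDegree_sub_le_of_le hG₀ (natDegree_mul_le_of_le hG₂ hP₀)).trans (by omega)

end Q5

theorem Q5_conic_met_by_at_most_27_lines_general
    (q : ℕ → ℕ → ℂ) (h : ℕ → ℕ → ℕ → ℂ)
    (f : MvPolynomial (Fin 4) ℂ)
    (hf : f = X 3 ^ 2 * X 2 ^ 2 + X 3 * (X 1 ^ 3 + X 2 * quadForm q) + quartForm h)
    (h400 : h 4 0 0 = 0) (h310 : h 3 1 0 = 0) (q20 : q 2 0 = 0)
    (h220 : h 2 2 0 = 1)
    (hfin : {L : Set P3 | IsLine L ∧ L ⊆ zeroSet f}.Finite)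
    (Con : Set P3)
    (hCon : Con = {P : P3 | P.rep 2 = 0 ∧
      P.rep 0 ^ 2 + h 1 3 0 * P.rep 0 * P.rep 1 + h 0 4 0 * P.rep 1 ^ 2 +
        P.rep 1 * P.rep 3 = 0}) :
    {L : Set P3 | IsLine L ∧ L ⊆ zeroSet f ∧ (L ∩ Con).Nonempty}.ncard ≤ 27 := by
  have hF := Q5.eval_eq_quartic q h f hf h400 h310 q20 h220
  have hlines (W : Submodule ℂ (Fin 4 → ℂ)) :
      {P : P3 | P.submodule ≤ W} ⊆ zeroSet f ↔ ∀ v ∈ W, Q5.quartic q h v = 0 := by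
    simpa only [hF] using setOf_submodule_le_subset_zeroSet_iff (f := f) four_ne_zero
      (fun c v => by simp only [hF, Q5.quartic_smul]) W
  have hparams : (Q5.lineParams q h).Finite := by
    refine Set.Finite.of_finite_image (hfin.subset ?_)
      (Projectivization.setOf_submodule_le_injective.comp (Q5.lineSpan_injective q h)).injOn
    rintro _ ⟨x, hx, rfl⟩
    exact ⟨⟨_, Q5.finrank_lineSpan q h x, rfl⟩,
      (hlines _).2 (Q5.quartic_eq_zero_of_mem_lineSpan q h hx)⟩
  have hcover : {L : Set P3 | IsLine L ∧ L ⊆ zeroSet f ∧ (L ∩ Con).Nonempty} ⊆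
      insert {P : P3 | P.submodule ≤ Q5.lineXW}
        ((fun x => {P : P3 | P.submodule ≤ Q5.lineSpan q h x}) '' Q5.lineParams q h) := by
    rintro _ ⟨⟨W, hW, rfl⟩, hWS, P, hPW, hPC⟩
    rw [hCon] at hPC
    rcases Q5.eq_lineXW_or_eq_lineSpan q h hW ((hlines W).1 hWS)
      (hPW (Projectivization.rep_mem_submodule P)) P.rep_nonzero hPC.1 hPC.2 with rfl | ⟨x, hx, rfl⟩
    exacts [Or.inl rfl, Or.inr ⟨x, hx, rfl⟩]
  calc _ ≤ _ := Set.ncard_le_ncard hcover ((hparams.image _).insert _)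
    _ ≤ (Q5.lineParams q h).ncard + 1 :=
      (Set.ncard_insert_le _ _).trans (Nat.succ_le_succ (Set.ncard_image_le hparams))
    _ ≤ 27 := by linarith [Q5.ncard_lineParams_le q h hparams]

theorem Q5_conic_met_by_at_most_27_lines
    (q : ℕ → ℕ → ℂ) (h : ℕ → ℕ → ℕ → ℂ)
    (f : MvPolynomial (Fin 4) ℂ)
    (hf : f = X 3 ^ 2 * X 2 ^ 2 + X 3 * (X 1 ^ 3 + X 2 * quadForm q) + quartForm h)
    (h400 : h 4 0 0 = 0) (h310 : h 3 1 0 = 0) (q20 : q 2 0 = 0) (h301 : h 3 0 1 ≠ 0)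
    (h220 : h 2 2 0 = 1)
    (hiso : IsIsolatedPtOf ptO {Q : P3 | IsSingPt f Q})
    (hfin : {L : Set P3 | IsLine L ∧ L ⊆ zeroSet f}.Finite)
    (Con : Set P3)
    (hCon : Con = {P : P3 | P.rep 2 = 0 ∧
      P.rep 0 ^ 2 + h 1 3 0 * P.rep 0 * P.rep 1 + h 0 4 0 * P.rep 1 ^ 2 +
        P.rep 1 * P.rep 3 = 0}) :
    {L : Set P3 | IsLine L ∧ L ⊆ zeroSet f ∧ (L ∩ Con).Nonempty}.ncard ≤ 27 :=
  Q5_conic_met_by_at_most_27_lines_general q h f hf h400 h310 q20 h220 hfin Con hCon
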